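/- Let (f,g,ρ) be a warped Berger solution of Ricci flow on S^1×S^3 defined on [0,T), and set C₀ := max{ max_ξ |f(ξ,0)−g(ξ,0)|/g(ξ,0), max_ξ |g(ξ,0)−f(ξ,0)|/f(ξ,0) }. Then the pointwise eccentricity bound |f(ξ,t) − g(ξ,t)| ≤ C₀·M(ξ,t) holds for all (ξ,t) ∈ S^1×[0,T). -/

import Mathlib

open Real Set Filter Topology
open scoped ENNReal

noncomputable section

/-- Partial derivative in the first (spatial, `ξ`) variable. -/
def pd1 (φ : ℝ → ℝ → ℝ) (ξ t : ℝ) : ℝ := deriv (fun x => φ x t) ξ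

/-- Partial derivative in the second (time) variable: `φ_t`. -/
def pdt (φ : ℝ → ℝ → ℝ) (ξ t : ℝ) : ℝ := deriv (fun τ => φ ξ τ) t

/-- Derivative with respect to arclength `s` (where `ds = ρ dξ`): `φ_s := ρ⁻¹ ∂_ξ φ`. -/
def Ds (ρ φ : ℝ → ℝ → ℝ) (ξ t : ℝ) : ℝ := pd1 φ ξ t / ρ ξ t

/-- `t` lies in the existence interval `[0,T)`, where `T ∈ (0,∞]`. -/
def InDom (T : ℝ≥0∞) (t : ℝ) : Prop := 0 ≤ t ∧ ENNReal.ofReal t < T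

/-- A warped Berger solution of Ricci flow on `S¹ × S³` with existence time `T ∈ (0,∞]`:
smooth positive `2π`-periodic-in-`ξ` functions `f, g, ρ` on `S¹ × [0,T)` satisfying
  `f_t = f_ss + 2 (g_s/g) f_s − 2 f³/g⁴`,
  `g_t = g_ss + (f_s/f + g_s/g) g_s + 2 (f² − 2g²)/g³`,
  `(log ρ)_t = f_ss/f + 2 g_ss/g`. -/
structure WarpedBerger (T : ℝ≥0∞) (f g ρ : ℝ → ℝ → ℝ) : Prop where
  T_pos : 0 < T
  f_pos : ∀ ξ t : ℝ, InDom T t → 0 < f ξ t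
  g_pos : ∀ ξ t : ℝ, InDom T t → 0 < g ξ t
  ρ_pos : ∀ ξ t : ℝ, InDom T t → 0 < ρ ξ t
  f_per : ∀ ξ t : ℝ, f (ξ + 2 * π) t = f ξ t
  g_per : ∀ ξ t : ℝ, g (ξ + 2 * π) t = g ξ t
  ρ_per : ∀ ξ t : ℝ, ρ (ξ + 2 * π) t = ρ ξ t
  smooth : ContDiffOn ℝ (⊤ : ℕ∞)
      (fun p : ℝ × ℝ => (f p.1 p.2, g p.1 p.2, ρ p.1 p.2)) (Set.univ ×ˢ {t : ℝ | InDom T t})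
  eq_f : ∀ ξ t : ℝ, 0 < t → InDom T t →
    pdt f ξ t = Ds ρ (Ds ρ f) ξ t + 2 * (Ds ρ g ξ t / g ξ t) * Ds ρ f ξ t
      - 2 * (f ξ t) ^ 3 / (g ξ t) ^ 4
  eq_g : ∀ ξ t : ℝ, 0 < t → InDom T t →
    pdt g ξ t = Ds ρ (Ds ρ g) ξ t
      + (Ds ρ f ξ t / f ξ t + Ds ρ g ξ t / g ξ t) * Ds ρ g ξ t
      + 2 * ((f ξ t) ^ 2 - 2 * (g ξ t) ^ 2) / (g ξ t) ^ 3
  eq_ρ : ∀ ξ t : ℝ, 0 < t → InDom T t →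
    pdt (fun x τ => Real.log (ρ x τ)) ξ t
      = Ds ρ (Ds ρ f) ξ t / f ξ t + 2 * (Ds ρ (Ds ρ g) ξ t / g ξ t)

/-! At a spatial critical point of `u = f / g` one has `f_s / f = g_s / g`, and the flow
equations reduce to `u_t = u_ss + 4 u (1 - u²) / g²`; likewise `v = g / f` satisfies
`v_t = v_ss + 4 (f / g) (1 - v²) / g²` at its critical points. The reaction terms are negative where
the ratios exceed `1`, so the maximum principle on the circle keeps `u, v ≤ 1 + C₀`, which is the
eccentricity bound `|f - g| ≤ C₀ min {f, g}`. -/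

open Function

theorem IsLocalMax.deriv_deriv_nonpos {φ : ℝ → ℝ} {x : ℝ} (h : IsLocalMax φ x)
    (hc : ContinuousAt φ x) : deriv (deriv φ) x ≤ 0 := by
  by_contra! hpos
  -- Otherwise `x` is also a local minimum, so `φ` is locally constant and `φ'' x = 0`.
  have hconst : φ =ᶠ[𝓝 x] fun _ => φ x :=
    ((isLocalMin_of_deriv_deriv_pos hpos h.deriv_eq_zero hc).and h).mono
      fun y hy => le_antisymm hy.2 hy.1
  have hderiv : deriv φ =ᶠ[𝓝 x] fun _ => 0 :=
    hconst.eventuallyEq_nhds.mono fun y hy => by rw [hy.deriv_eq, deriv_const]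
  rw [hderiv.deriv_eq, deriv_const] at hpos
  exact hpos.false

theorem IsMaxOn.hasDerivWithinAt_Icc_right_nonneg {φ : ℝ → ℝ} {a b L : ℝ} (hab : a < b)
    (hmax : IsMaxOn φ (Icc a b) b) (hd : HasDerivWithinAt φ L (Icc a b) b) : 0 ≤ L := by
  have hcone : a - b ∈ posTangentConeAt (Icc a b) b :=
    sub_mem_posTangentConeAt_of_segment_subset (by rw [segment_symm, segment_eq_Icc hab.le])
  have := hmax.localize.hasFDerivWithinAt_nonpos hd hcone
  simp only [ContinuousLinearMap.toSpanSingleton_apply, smul_eq_mul] at this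
  nlinarith

theorem exists_isMaxOn_univ_prod_of_periodic {F : ℝ × ℝ → ℝ} {p : ℝ} {K : Set ℝ} (hp : 0 < p)
    (hK : IsCompact K) (hKne : K.Nonempty) (hF : ContinuousOn F (univ ×ˢ K))
    (hper : ∀ x t, F (x + p, t) = F (x, t)) : ∃ q ∈ univ ×ˢ K, IsMaxOn F (univ ×ˢ K) q := by
  obtain ⟨q, hq, hmax⟩ := (isCompact_Icc.prod hK).exists_isMaxOn
    ((nonempty_Icc.2 hp.le).prod hKne) (hF.mono (prod_mono (subset_univ _) subset_rfl))
  refine ⟨q, ⟨trivial, hq.2⟩, fun ⟨x, t⟩ ⟨_, ht⟩ => ?_⟩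
  have hper_t : Periodic (fun x => F (x, t)) p := fun x => hper x t
  obtain ⟨y, hy, hxy⟩ := hper_t.exists_mem_Ico₀ hp x
  show F (x, t) ≤ F q
  rw [hxy]
  exact hmax ⟨⟨hy.1, hy.2.le⟩, ht⟩

theorem periodic_maximum_principle {w : ℝ → ℝ → ℝ} {p τ B : ℝ} (hp : 0 < p) (hτ : 0 ≤ τ)
    (hcont : ContinuousOn (uncurry w) (univ ×ˢ Icc 0 τ))
    (hdiff : ∀ ξ, ∀ t ∈ Ioc 0 τ, DifferentiableAt ℝ (w ξ) t)
    (hper : ∀ t, Periodic (fun x => w x t) p)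
    (hmax : ∀ ξ, ∀ t ∈ Ioc 0 τ, pd1 w ξ t = 0 → pd1 (pd1 w) ξ t ≤ 0 → B < w ξ t →
      pdt w ξ t ≤ 0)
    (h0 : ∀ ξ, w ξ 0 ≤ B) (ξ : ℝ) : w ξ τ ≤ B := by
  by_contra! hξ
  set ε := w ξ τ - B
  set δ := ε / (2 * (τ + 1))
  have hε : 0 < ε := sub_pos.2 hξ
  have hδ : 0 < δ := by positivity
  have hδτ : δ * τ ≤ ε / 2 := by
    rw [div_mul_eq_mul_div, div_le_div_iff₀ (by positivity) two_pos]
    nlinarith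
  -- At a maximum point of `w - δ t` over the strip, `w_t ≥ δ > 0`, while there `w > B`.
  obtain ⟨⟨ξ₀, t₀⟩, ⟨-, ht₀⟩, hW⟩ := exists_isMaxOn_univ_prod_of_periodic
    (F := fun q => w q.1 q.2 - δ * q.2) hp isCompact_Icc (nonempty_Icc.2 hτ)
    (hcont.sub (by fun_prop)) (fun x t => by simp only [hper t x])
  have hW' : ∀ x, ∀ s ∈ Icc 0 τ, w x s - δ * s ≤ w ξ₀ t₀ - δ * t₀ :=
    fun x s hs => hW (show (x, s) ∈ univ ×ˢ Icc 0 τ from ⟨trivial, hs⟩)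
  have hlow : B + ε / 2 ≤ w ξ₀ t₀ - δ * t₀ := by linarith [hW' ξ τ ⟨hτ, le_rfl⟩]
  have ht₀pos : 0 < t₀ := ht₀.1.lt_of_ne (by rintro rfl; linarith [h0 ξ₀])
  have hB : B < w ξ₀ t₀ := by nlinarith
  have hspace : IsLocalMax (fun x => w x t₀) ξ₀ :=
    Eventually.of_forall fun x => by linarith [hW' x t₀ ht₀]
  have hslice : ContinuousAt (fun x => w x t₀) ξ₀ :=
    (hcont.comp_continuous (continuous_id.prodMk continuous_const)
      fun _ => ⟨trivial, ht₀⟩).continuousAt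
  have htime : 0 ≤ pdt w ξ₀ t₀ - δ := by
    refine IsMaxOn.hasDerivWithinAt_Icc_right_nonneg ht₀pos
      (fun s hs => hW' ξ₀ s ⟨hs.1, hs.2.trans ht₀.2⟩) ?_
    exact (((hdiff ξ₀ t₀ ⟨ht₀pos, ht₀.2⟩).hasDerivAt.sub
      ((hasDerivAt_id t₀).const_mul δ)).hasDerivWithinAt).congr_deriv (by simp [pdt])
  linarith [hmax ξ₀ t₀ ⟨ht₀pos, ht₀.2⟩ hspace.deriv_eq_zero
    (hspace.deriv_deriv_nonpos hslice) hB]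

section InDom

variable {T : ℝ≥0∞}

theorem inDom_mem_nhds {t : ℝ} (ht0 : 0 < t) (ht : InDom T t) : {s | InDom T s} ∈ 𝓝 t :=
  mem_of_superset
    ((isOpen_Ioi.inter (ENNReal.continuous_ofReal.isOpen_preimage _ isOpen_Iio)).mem_nhds
      ⟨ht0, ht.2⟩) fun _ hs => ⟨le_of_lt hs.1, hs.2⟩

theorem Icc_subset_inDom {t : ℝ} (ht : InDom T t) : Icc 0 t ⊆ {s | InDom T s} :=
  fun _ hs => ⟨hs.1, (ENNReal.ofReal_le_ofReal hs.2).trans_lt ht.2⟩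

theorem ContDiffOn.contDiff_slice_of_inDom {Φ : ℝ → ℝ → ℝ} {n : WithTop ℕ∞}
    (hΦ : ContDiffOn ℝ n (uncurry Φ) (univ ×ˢ {t | InDom T t})) {t : ℝ} (ht : InDom T t) :
    ContDiff ℝ n (fun x => Φ x t) :=
  contDiffOn_univ.1 <| hΦ.comp (contDiff_id.prodMk contDiff_const).contDiffOn
    fun _ _ => ⟨trivial, ht⟩

theorem ContDiffOn.differentiableAt_of_inDom {Φ : ℝ → ℝ → ℝ} {n : WithTop ℕ∞} (hn : n ≠ 0)
    (hΦ : ContDiffOn ℝ n (uncurry Φ) (univ ×ˢ {t | InDom T t})) (ξ : ℝ) {t : ℝ} (ht0 : 0 < t)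
    (ht : InDom T t) : DifferentiableAt ℝ (Φ ξ) t :=
  ((hΦ.contDiffAt (prod_mem_nhds univ_mem (inDom_mem_nhds ht0 ht))).differentiableAt hn).comp t
    (differentiableAt_const ξ |>.prodMk differentiableAt_id)

theorem maximum_principle_of_inDom {w : ℝ → ℝ → ℝ} {p B : ℝ} (hp : 0 < p)
    (hw : ContDiffOn ℝ 1 (uncurry w) (univ ×ˢ {t | InDom T t}))
    (hper : ∀ t, Periodic (fun x => w x t) p)
    (hmax : ∀ ξ t, 0 < t → InDom T t → pd1 w ξ t = 0 → pd1 (pd1 w) ξ t ≤ 0 → B < w ξ t →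
      pdt w ξ t ≤ 0)
    (h0 : ∀ ξ, w ξ 0 ≤ B) {ξ t : ℝ} (ht : InDom T t) : w ξ t ≤ B := by
  have hdom : ∀ s ∈ Ioc 0 t, InDom T s :=
    fun _ hs => Icc_subset_inDom ht (Ioc_subset_Icc_self hs)
  exact periodic_maximum_principle hp ht.1
    (hw.continuousOn.mono (prod_mono subset_rfl (Icc_subset_inDom ht)))
    (fun ξ _ hs => hw.differentiableAt_of_inDom one_ne_zero ξ hs.1 (hdom _ hs))
    hper (fun ξ s hs => hmax ξ s hs.1 (hdom s hs)) h0 ξ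

end InDom

theorem deriv_mul_eq_mul_deriv_of_deriv_div_eq_zero {p q : ℝ → ℝ} {x : ℝ}
    (hp : DifferentiableAt ℝ p x) (hq : DifferentiableAt ℝ q x) (hqx : q x ≠ 0)
    (h : deriv (fun y => p y / q y) x = 0) : deriv p x * q x = p x * deriv q x := by
  rw [deriv_fun_div hp hq hqx, div_eq_zero_iff, sub_eq_zero] at h
  exact h.resolve_right (pow_ne_zero 2 hqx)

theorem deriv_deriv_div_of_deriv_mul_eq_mul_deriv {p q : ℝ → ℝ} {x : ℝ} (hp : ContDiff ℝ 2 p)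
    (hq : ContDiff ℝ 2 q) (hq0 : ∀ y, q y ≠ 0) (hcrit : deriv p x * q x = p x * deriv q x) :
    deriv (deriv fun y => p y / q y) x
      = (deriv (deriv p) x * q x - p x * deriv (deriv q) x) / q x ^ 2 := by
  have hp1 := hp.differentiable two_ne_zero
  have hq1 := hq.differentiable two_ne_zero
  have hD : deriv (fun y => p y / q y) = fun y => (deriv p y * q y - p y * deriv q y) / q y ^ 2 :=
    funext fun y => deriv_fun_div (hp1 y) (hq1 y) (hq0 y)
  have hD' : HasDerivAt (fun y => (deriv p y * q y - p y * deriv q y) / q y ^ 2) _ x :=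
    (((hp.differentiable_deriv_two x).hasDerivAt.mul (hq1 x).hasDerivAt).sub
      ((hp1 x).hasDerivAt.mul (hq.differentiable_deriv_two x).hasDerivAt)).div
      ((hq1 x).hasDerivAt.pow 2) (pow_ne_zero 2 (hq0 x))
  have hN : deriv p x * q x - p x * deriv q x = 0 := sub_eq_zero.2 hcrit
  rw [hD, hD'.deriv]
  simp only [Pi.sub_apply, Pi.mul_apply, hN]
  field_simp [hq0 x]
  ring

theorem Ds_Ds_eq {ρ φ : ℝ → ℝ → ℝ} {ξ t : ℝ} (hφ : ContDiff ℝ 2 fun x => φ x t)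
    (hρ : DifferentiableAt ℝ (fun x => ρ x t) ξ) (hρ0 : ρ ξ t ≠ 0) :
    Ds ρ (Ds ρ φ) ξ t = (pd1 (pd1 φ) ξ t * ρ ξ t - pd1 φ ξ t * pd1 ρ ξ t) / ρ ξ t ^ 3 := by
  simp only [Ds, pd1]
  rw [deriv_fun_div (hφ.differentiable_deriv_two ξ) hρ hρ0]
  field_simp

theorem div_le_add_one_of_abs_sub_div_le {a b C : ℝ} (hb : 0 < b) (h : |a - b| / b ≤ C) :
    a / b ≤ C + 1 := by
  have : a / b = (a - b) / b + 1 := by field_simp; ring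
  rw [this]
  gcongr
  exact (div_le_div_of_nonneg_right (le_abs_self _) hb.le).trans h

theorem abs_sub_le_mul_min_of_div_le {a b C : ℝ} (ha : 0 < a) (hb : 0 < b) (hab : a / b ≤ C + 1)
    (hba : b / a ≤ C + 1) : |a - b| ≤ C * min a b := by
  rw [div_le_iff₀ hb] at hab
  rw [div_le_iff₀ ha] at hba
  rcases le_total a b with h | h
  · rw [min_eq_left h, abs_of_nonpos (sub_nonpos.2 h)]
    linarith
  · rw [min_eq_right h, abs_of_nonneg (sub_nonneg.2 h)]
    linarith

theorem bddAbove_range_abs_sub_div_of_periodic {a b : ℝ → ℝ} {p : ℝ} (hp : p ≠ 0)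
    (ha : Continuous a) (hb : Continuous b) (hb0 : ∀ x, b x ≠ 0) (hpa : Periodic a p)
    (hpb : Periodic b p) : BddAbove (range fun x => |a x - b x| / b x) :=
  (Periodic.compact_of_continuous (f := fun x => |a x - b x| / b x)
    (fun x => by simp only [hpa x, hpb x]) hp
    (((ha.sub hb).abs).div hb hb0)).bddAbove

namespace WarpedBerger

variable {T : ℝ≥0∞} {f g ρ : ℝ → ℝ → ℝ}

theorem inDom_zero (sol : WarpedBerger T f g ρ) : InDom T 0 :=
  ⟨le_rfl, by simpa using sol.T_pos⟩

theorem contDiffOn_f (sol : WarpedBerger T f g ρ) :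
    ContDiffOn ℝ (⊤ : ℕ∞) (uncurry f) (univ ×ˢ {t | InDom T t}) :=
  contDiff_fst.comp_contDiffOn sol.smooth

theorem contDiffOn_g (sol : WarpedBerger T f g ρ) :
    ContDiffOn ℝ (⊤ : ℕ∞) (uncurry g) (univ ×ˢ {t | InDom T t}) :=
  (contDiff_fst.comp contDiff_snd).comp_contDiffOn sol.smooth

theorem contDiffOn_ρ (sol : WarpedBerger T f g ρ) :
    ContDiffOn ℝ (⊤ : ℕ∞) (uncurry ρ) (univ ×ˢ {t | InDom T t}) :=
  (contDiff_snd.comp contDiff_snd).comp_contDiffOn sol.smooth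

theorem contDiff_slice_f (sol : WarpedBerger T f g ρ) {t : ℝ} (ht : InDom T t) :
    ContDiff ℝ 2 (fun x => f x t) :=
  (sol.contDiffOn_f.contDiff_slice_of_inDom ht).of_le (by norm_cast)

theorem contDiff_slice_g (sol : WarpedBerger T f g ρ) {t : ℝ} (ht : InDom T t) :
    ContDiff ℝ 2 (fun x => g x t) :=
  (sol.contDiffOn_g.contDiff_slice_of_inDom ht).of_le (by norm_cast)

theorem differentiableAt_slice_ρ (sol : WarpedBerger T f g ρ) (ξ : ℝ) {t : ℝ} (ht : InDom T t) :
    DifferentiableAt ℝ (fun x => ρ x t) ξ :=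
  (sol.contDiffOn_ρ.contDiff_slice_of_inDom ht).differentiable (by simp) ξ

theorem differentiableAt_time_f (sol : WarpedBerger T f g ρ) (ξ : ℝ) {t : ℝ} (ht0 : 0 < t)
    (ht : InDom T t) : DifferentiableAt ℝ (f ξ) t :=
  sol.contDiffOn_f.differentiableAt_of_inDom (by simp) ξ ht0 ht

theorem differentiableAt_time_g (sol : WarpedBerger T f g ρ) (ξ : ℝ) {t : ℝ} (ht0 : 0 < t)
    (ht : InDom T t) : DifferentiableAt ℝ (g ξ) t :=
  sol.contDiffOn_g.differentiableAt_of_inDom (by simp) ξ ht0 ht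

theorem pdt_f_div_g (sol : WarpedBerger T f g ρ) {ξ t : ℝ} (ht0 : 0 < t) (ht : InDom T t)
    (hcrit : pd1 (fun x s => f x s / g x s) ξ t = 0) :
    pdt (fun x s => f x s / g x s) ξ t
      = pd1 (pd1 fun x s => f x s / g x s) ξ t / ρ ξ t ^ 2
        + 4 * (f ξ t / g ξ t) * (1 - (f ξ t / g ξ t) ^ 2) / g ξ t ^ 2 := by
  have hf := sol.contDiff_slice_f ht
  have hg := sol.contDiff_slice_g ht
  have hρ := sol.differentiableAt_slice_ρ ξ ht
  have hf0 := (sol.f_pos ξ t ht).ne'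
  have hg0 := (sol.g_pos ξ t ht).ne'
  have hρ0 := (sol.ρ_pos ξ t ht).ne'
  have hrel : pd1 f ξ t * g ξ t = f ξ t * pd1 g ξ t :=
    deriv_mul_eq_mul_deriv_of_deriv_div_eq_zero (hf.differentiable two_ne_zero ξ)
      (hg.differentiable two_ne_zero ξ) hg0 hcrit
  have hu₂ : pd1 (pd1 fun x s => f x s / g x s) ξ t
      = (pd1 (pd1 f) ξ t * g ξ t - f ξ t * pd1 (pd1 g) ξ t) / g ξ t ^ 2 :=
    deriv_deriv_div_of_deriv_mul_eq_mul_deriv hf hg (fun x => (sol.g_pos x t ht).ne') hrel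
  have hut : pdt (fun x s => f x s / g x s) ξ t
      = (pdt f ξ t * g ξ t - f ξ t * pdt g ξ t) / g ξ t ^ 2 :=
    deriv_fun_div (sol.differentiableAt_time_f ξ ht0 ht) (sol.differentiableAt_time_g ξ ht0 ht) hg0
  rw [hut, hu₂, sol.eq_f ξ t ht0 ht, sol.eq_g ξ t ht0 ht, Ds_Ds_eq hf hρ hρ0,
    Ds_Ds_eq hg hρ hρ0]
  simp only [Ds]
  field_simp
  -- The first-order terms, including all those with `ρ_ξ`, add up to a multiple of `hrel`.
  linear_combination (ρ ξ t * g ξ t ^ 2 * pd1 g ξ t - g ξ t ^ 3 * pd1 ρ ξ t) * hrel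

theorem pdt_g_div_f (sol : WarpedBerger T f g ρ) {ξ t : ℝ} (ht0 : 0 < t) (ht : InDom T t)
    (hcrit : pd1 (fun x s => g x s / f x s) ξ t = 0) :
    pdt (fun x s => g x s / f x s) ξ t
      = pd1 (pd1 fun x s => g x s / f x s) ξ t / ρ ξ t ^ 2
        + 4 * (f ξ t / g ξ t) * (1 - (g ξ t / f ξ t) ^ 2) / g ξ t ^ 2 := by
  have hf := sol.contDiff_slice_f ht
  have hg := sol.contDiff_slice_g ht
  have hρ := sol.differentiableAt_slice_ρ ξ ht
  have hf0 := (sol.f_pos ξ t ht).ne'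
  have hg0 := (sol.g_pos ξ t ht).ne'
  have hρ0 := (sol.ρ_pos ξ t ht).ne'
  have hrel : pd1 g ξ t * f ξ t = g ξ t * pd1 f ξ t :=
    deriv_mul_eq_mul_deriv_of_deriv_div_eq_zero (hg.differentiable two_ne_zero ξ)
      (hf.differentiable two_ne_zero ξ) hf0 hcrit
  have hv₂ : pd1 (pd1 fun x s => g x s / f x s) ξ t
      = (pd1 (pd1 g) ξ t * f ξ t - g ξ t * pd1 (pd1 f) ξ t) / f ξ t ^ 2 :=
    deriv_deriv_div_of_deriv_mul_eq_mul_deriv hg hf (fun x => (sol.f_pos x t ht).ne') hrel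
  have hvt : pdt (fun x s => g x s / f x s) ξ t
      = (pdt g ξ t * f ξ t - g ξ t * pdt f ξ t) / f ξ t ^ 2 :=
    deriv_fun_div (sol.differentiableAt_time_g ξ ht0 ht) (sol.differentiableAt_time_f ξ ht0 ht) hf0
  rw [hvt, hv₂, sol.eq_f ξ t ht0 ht, sol.eq_g ξ t ht0 ht, Ds_Ds_eq hf hρ hρ0,
    Ds_Ds_eq hg hρ hρ0]
  simp only [Ds]
  field_simp
  linear_combination (ρ ξ t * g ξ t ^ 2 * pd1 g ξ t - g ξ t ^ 3 * pd1 ρ ξ t) * hrel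

theorem f_div_g_le (sol : WarpedBerger T f g ρ) {B : ℝ} (hB : 1 ≤ B)
    (h0 : ∀ ξ, f ξ 0 / g ξ 0 ≤ B) {ξ t : ℝ} (ht : InDom T t) : f ξ t / g ξ t ≤ B := by
  refine maximum_principle_of_inDom (w := fun x s => f x s / g x s) two_pi_pos
    ((sol.contDiffOn_f.div sol.contDiffOn_g fun q hq => (sol.g_pos q.1 q.2 hq.2).ne').of_le
      (by norm_cast))
    (fun s x => by simp only [sol.f_per, sol.g_per]) (fun x s hs0 hs hcrit hconc hBu => ?_) h0 ht
  rw [sol.pdt_f_div_g hs0 hs hcrit]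
  have hdiff : pd1 (pd1 fun x s => f x s / g x s) x s / ρ x s ^ 2 ≤ 0 :=
    div_nonpos_of_nonpos_of_nonneg hconc (sq_nonneg _)
  have hreact : 4 * (f x s / g x s) * (1 - (f x s / g x s) ^ 2) / g x s ^ 2 ≤ 0 := by
    refine div_nonpos_of_nonpos_of_nonneg ?_ (sq_nonneg _)
    have : 1 < f x s / g x s := hB.trans_lt hBu
    nlinarith
  linarith

theorem g_div_f_le (sol : WarpedBerger T f g ρ) {B : ℝ} (hB : 1 ≤ B)
    (h0 : ∀ ξ, g ξ 0 / f ξ 0 ≤ B) {ξ t : ℝ} (ht : InDom T t) : g ξ t / f ξ t ≤ B := by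
  refine maximum_principle_of_inDom (w := fun x s => g x s / f x s) two_pi_pos
    ((sol.contDiffOn_g.div sol.contDiffOn_f fun q hq => (sol.f_pos q.1 q.2 hq.2).ne').of_le
      (by norm_cast))
    (fun s x => by simp only [sol.f_per, sol.g_per]) (fun x s hs0 hs hcrit hconc hBv => ?_) h0 ht
  rw [sol.pdt_g_div_f hs0 hs hcrit]
  have hdiff : pd1 (pd1 fun x s => g x s / f x s) x s / ρ x s ^ 2 ≤ 0 :=
    div_nonpos_of_nonpos_of_nonneg hconc (sq_nonneg _)
  have hreact : 4 * (f x s / g x s) * (1 - (g x s / f x s) ^ 2) / g x s ^ 2 ≤ 0 := by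
    refine div_nonpos_of_nonpos_of_nonneg ?_ (sq_nonneg _)
    have hv : 1 < g x s / f x s := hB.trans_lt hBv
    exact mul_nonpos_of_nonneg_of_nonpos
      (mul_nonneg zero_le_four (div_pos (sol.f_pos x s hs) (sol.g_pos x s hs)).le) (by nlinarith)
  linarith

end WarpedBerger

/-- The eccentricity of every warped Berger solution of Ricci flow is
uniformly bounded:  with `C₀` defined from the initial data as
`max { max_ξ |f−g|/g , max_ξ |g−f|/f }` at `t = 0`, one has
`|f − g| ≤ C₀ · min{f,g}` pointwise for as long as the solution exists. -/
theorem eccentricity_bound (T : ℝ≥0∞) (f g ρ : ℝ → ℝ → ℝ)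
    (sol : WarpedBerger T f g ρ) :
    ∀ ξ t : ℝ, InDom T t →
      |f ξ t - g ξ t| ≤
        max (⨆ ξ' : ℝ, |f ξ' 0 - g ξ' 0| / g ξ' 0)
            (⨆ ξ' : ℝ, |g ξ' 0 - f ξ' 0| / f ξ' 0) * min (f ξ t) (g ξ t) := by
  intro ξ t ht
  have h0 := sol.inDom_zero
  have hf0 : Continuous fun x => f x 0 := (sol.contDiff_slice_f h0).continuous
  have hg0 : Continuous fun x => g x 0 := (sol.contDiff_slice_g h0).continuous
  have hbdd₁ := bddAbove_range_abs_sub_div_of_periodic two_pi_pos.ne' hf0 hg0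
    (fun x => (sol.g_pos x 0 h0).ne') (fun x => sol.f_per x 0) (fun x => sol.g_per x 0)
  have hbdd₂ := bddAbove_range_abs_sub_div_of_periodic two_pi_pos.ne' hg0 hf0
    (fun x => (sol.f_pos x 0 h0).ne') (fun x => sol.g_per x 0) (fun x => sol.f_per x 0)
  set C₀ := max (⨆ ξ' : ℝ, |f ξ' 0 - g ξ' 0| / g ξ' 0)
    (⨆ ξ' : ℝ, |g ξ' 0 - f ξ' 0| / f ξ' 0)
  have hC₀ : 0 ≤ C₀ := le_max_of_le_left
    ((div_nonneg (abs_nonneg _) (sol.g_pos 0 0 h0).le).trans (le_ciSup hbdd₁ 0))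
  have hfg : f ξ t / g ξ t ≤ C₀ + 1 :=
    sol.f_div_g_le (by linarith) (fun x => div_le_add_one_of_abs_sub_div_le (sol.g_pos x 0 h0)
      ((le_ciSup hbdd₁ x).trans (le_max_left _ _))) ht
  have hgf : g ξ t / f ξ t ≤ C₀ + 1 :=
    sol.g_div_f_le (by linarith) (fun x => div_le_add_one_of_abs_sub_div_le (sol.f_pos x 0 h0)
      ((le_ciSup hbdd₂ x).trans (le_max_right _ _))) ht
  exact abs_sub_le_mul_min_of_div_le (sol.f_pos ξ t ht) (sol.g_pos ξ t ht) hfg hgf
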